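/- The set of rational points of the elliptic curve E : y² = x³ + 1 over ℚ consists of exactly six points: the point at infinity together with the affine points (0, 1), (0, −1), (−1, 0), (2, 3), and (2, −3). -/

import Mathlib

/-!
For a point with `x ≠ 0`, the 3-isogeny `(x, y) ↦ ((x³ + 4) / x², y (x³ - 8) / x³)` onto
`Y² = X³ - 27`, followed by `(X, Y) ↦ ((9 + Y) / (3X), (9 - Y) / (3X))`, lands on the cubic
`u³ + v³ = 2`; in terms of `x, y` this is `u = U / D`, `v = V / D` with `D = 3x (y² + 3)` and
`U, V = ±y³ + 9y² ∓ 9y - 9`. By Euler's descent, `a³ + b³ = 2c³` has no integer solution with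
`a ≠ b` and `c ≠ 0`. A common prime factor of `a` and `b` divides `c` and can be cancelled; for
coprime `a = p + q`, `b = p - q` the equation reads `p (p² + 3q²) = c³`, the two factors are
coprime up to a factor `9`, and unique factorisation in `ℤ[ω]` makes `p² + 3q²` the norm of a
cube `(m + n√-3)³`; splitting `p` or `q` accordingly produces a solution with smaller `|c|`. Hence `U = V`, that is `y (y² - 9) = 0`, which leaves the five listed affine points.
-/

/-- The elliptic curve `y² = x³ + 1` over `ℚ` in Weierstrass form. -/
def W₁ : WeierstrassCurve.Affine ℚ := { a₁ := 0, a₂ := 0, a₃ := 0, a₄ := 0, a₆ := 1 }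

/-- `⟨a, b⟩` stands for `a + b ω`, where `ω² + ω + 1 = 0`. -/
@[ext]
structure EisensteinInt where
  re : ℤ
  im : ℤ

namespace EisensteinInt

instance : Zero EisensteinInt := ⟨⟨0, 0⟩⟩
instance : One EisensteinInt := ⟨⟨1, 0⟩⟩
instance : Add EisensteinInt := ⟨fun a b => ⟨a.re + b.re, a.im + b.im⟩⟩
instance : Neg EisensteinInt := ⟨fun a => ⟨-a.re, -a.im⟩⟩
instance : Mul EisensteinInt :=
  ⟨fun a b => ⟨a.re * b.re - a.im * b.im, a.re * b.im + a.im * b.re - a.im * b.im⟩⟩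

@[simp] lemma zero_re : (0 : EisensteinInt).re = 0 := rfl
@[simp] lemma zero_im : (0 : EisensteinInt).im = 0 := rfl
@[simp] lemma one_re : (1 : EisensteinInt).re = 1 := rfl
@[simp] lemma one_im : (1 : EisensteinInt).im = 0 := rfl
@[simp] lemma add_re (a b : EisensteinInt) : (a + b).re = a.re + b.re := rfl
@[simp] lemma add_im (a b : EisensteinInt) : (a + b).im = a.im + b.im := rfl
@[simp] lemma neg_re (a : EisensteinInt) : (-a).re = -a.re := rfl
@[simp] lemma neg_im (a : EisensteinInt) : (-a).im = -a.im := rfl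
@[simp] lemma mul_re (a b : EisensteinInt) : (a * b).re = a.re * b.re - a.im * b.im := rfl
@[simp] lemma mul_im (a b : EisensteinInt) :
    (a * b).im = a.re * b.im + a.im * b.re - a.im * b.im := rfl

instance : CommRing EisensteinInt where
  add_assoc a b c := by ext <;> simp only [add_re, add_im] <;> ring
  zero_add a := by ext <;> simp
  add_zero a := by ext <;> simp
  add_comm a b := by ext <;> simp only [add_re, add_im] <;> ring
  neg_add_cancel a := by ext <;> simp
  mul_assoc a b c := by ext <;> simp only [mul_re, mul_im] <;> ring
  one_mul a := by ext <;> simp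
  mul_one a := by ext <;> simp
  left_distrib a b c := by ext <;> simp only [mul_re, mul_im, add_re, add_im] <;> ring
  right_distrib a b c := by ext <;> simp only [mul_re, mul_im, add_re, add_im] <;> ring
  mul_comm a b := by ext <;> simp only [mul_re, mul_im] <;> ring
  zero_mul a := by ext <;> simp
  mul_zero a := by ext <;> simp
  nsmul := nsmulRec
  zsmul := zsmulRec

@[simp] lemma sub_re (a b : EisensteinInt) : (a - b).re = a.re - b.re := rfl
@[simp] lemma sub_im (a b : EisensteinInt) : (a - b).im = a.im - b.im := rfl

@[simp] lemma natCast_re (n : ℕ) : (n : EisensteinInt).re = n := by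
  induction n with
  | zero => rfl
  | succ k ih => simp [ih]

@[simp] lemma natCast_im (n : ℕ) : (n : EisensteinInt).im = 0 := by
  induction n with
  | zero => rfl
  | succ k ih => simp [ih]

@[simp] lemma intCast_re (n : ℤ) : (n : EisensteinInt).re = n := by
  cases n <;> simp [Int.negSucc_eq]

@[simp] lemma intCast_im (n : ℤ) : (n : EisensteinInt).im = 0 := by
  cases n <;> simp [Int.cast_negSucc]

@[simp] lemma ofNat_re (n : ℕ) [n.AtLeastTwo] :
    (no_index (OfNat.ofNat n) : EisensteinInt).re = OfNat.ofNat n := natCast_re n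
@[simp] lemma ofNat_im (n : ℕ) [n.AtLeastTwo] :
    (no_index (OfNat.ofNat n) : EisensteinInt).im = 0 := natCast_im n

def norm (a : EisensteinInt) : ℤ := a.re ^ 2 - a.re * a.im + a.im ^ 2

def conj (a : EisensteinInt) : EisensteinInt := ⟨a.re - a.im, -a.im⟩

lemma norm_mul (a b : EisensteinInt) : norm (a * b) = norm a * norm b := by
  simp only [norm, mul_re, mul_im]; ring

lemma four_mul_norm (a : EisensteinInt) : 4 * norm a = (2 * a.re - a.im) ^ 2 + 3 * a.im ^ 2 := by
  rw [norm]; ring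

lemma norm_nonneg (a : EisensteinInt) : 0 ≤ norm a := by
  nlinarith [four_mul_norm a, sq_nonneg (2 * a.re - a.im), sq_nonneg a.im]

lemma norm_eq_zero {a : EisensteinInt} : norm a = 0 ↔ a = 0 := by
  refine ⟨fun h => ?_, by rintro rfl; rfl⟩
  have him : a.im = 0 := by
    nlinarith [four_mul_norm a, sq_nonneg (2 * a.re - a.im), sq_nonneg a.im]
  have hre : a.re = 0 := by simpa [norm, him] using h
  ext <;> assumption

lemma mul_conj (a : EisensteinInt) : a * conj a = norm a := by
  ext <;> simp only [conj, mul_re, mul_im, intCast_re, intCast_im, norm] <;> ring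

instance : Nontrivial EisensteinInt := ⟨⟨0, 1, by simp [EisensteinInt.ext_iff]⟩⟩

instance : IsDomain EisensteinInt :=
  have : NoZeroDivisors EisensteinInt := ⟨fun {a b} h => by
    have := norm_mul a b
    rw [h, norm_eq_zero.mpr rfl, eq_comm, mul_eq_zero] at this
    simpa only [norm_eq_zero] using this⟩
  NoZeroDivisors.to_isDomain _

lemma norm_pos {a : EisensteinInt} (ha : a ≠ 0) : 0 < norm a :=
  (norm_nonneg a).lt_of_ne' (norm_eq_zero.not.mpr ha)

def roundDiv (x n : ℤ) : ℤ := (2 * x + n) / (2 * n)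

lemma abs_sub_mul_roundDiv_le {x n : ℤ} (hn : 0 < n) : 2 * |x - n * roundDiv x n| ≤ n := by
  have h := Int.mul_ediv_add_emod (2 * x + n) (2 * n)
  have h1 := Int.emod_nonneg (2 * x + n) (by omega : 2 * n ≠ 0)
  have h2 := Int.emod_lt_of_pos (2 * x + n) (by omega : 0 < 2 * n)
  have : |2 * (x - n * roundDiv x n)| ≤ n := by rw [abs_le, roundDiv]; constructor <;> linarith
  rwa [abs_mul, abs_two] at this

instance : Div EisensteinInt :=
  ⟨fun a b => ⟨roundDiv (a * conj b).re (norm b), roundDiv (a * conj b).im (norm b)⟩⟩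

instance : Mod EisensteinInt := ⟨fun a b => a - b * (a / b)⟩

lemma div_re (a b : EisensteinInt) : (a / b).re = roundDiv (a * conj b).re (norm b) := rfl
lemma div_im (a b : EisensteinInt) : (a / b).im = roundDiv (a * conj b).im (norm b) := rfl
lemma mod_def (a b : EisensteinInt) : a % b = a - b * (a / b) := rfl

lemma norm_mod_lt (a : EisensteinInt) {b : EisensteinInt} (hb : b ≠ 0) :
    norm (a % b) < norm b := by
  have hn := norm_pos hb
  set e : EisensteinInt := a % b * conj b with he
  have he' : e = a * conj b - (norm b : EisensteinInt) * (a / b) := by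
    rw [he, mod_def, ← mul_conj]; ring
  have hre : 2 * |e.re| ≤ norm b := by
    simpa [he', div_re] using abs_sub_mul_roundDiv_le (x := (a * conj b).re) hn
  have him : 2 * |e.im| ≤ norm b := by
    simpa [he', div_im] using abs_sub_mul_roundDiv_le (x := (a * conj b).im) hn
  have key : norm (a % b) * norm b = norm e := by
    rw [he, norm_mul]; congr 1; simp only [norm, conj]; ring
  have : norm e < norm b * norm b := by
    have := mul_le_mul hre him (by positivity) hn.le
    have := mul_le_mul hre hre (by positivity) hn.le
    have := mul_le_mul him him (by positivity) hn.le
    rw [norm]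
    nlinarith [sq_abs e.re, sq_abs e.im, abs_mul e.re e.im, neg_abs_le (e.re * e.im)]
  nlinarith

instance : EuclideanDomain EisensteinInt where
  quotient := (· / ·)
  remainder := (· % ·)
  quotient_zero a := by ext <;> simp [div_re, div_im, roundDiv, norm]
  quotient_mul_add_remainder_eq a b := by rw [mod_def]; ring
  r a b := (norm a).natAbs < (norm b).natAbs
  r_wellFounded := (measure fun a => (norm a).natAbs).wf
  remainder_lt a b hb := by
    have := norm_mod_lt a hb
    have := norm_nonneg (a % b)
    omega
  mul_left_not_lt a b hb := by
    have := norm_pos hb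
    have := norm_nonneg a
    rw [norm_mul, Int.natAbs_mul, not_lt]
    exact Nat.le_mul_of_pos_right _ (by omega)

lemma norm_one : norm 1 = 1 := rfl

lemma isUnit_iff_norm_eq_one {u : EisensteinInt} : IsUnit u ↔ norm u = 1 := by
  refine ⟨fun h => ?_, fun h => IsUnit.of_mul_eq_one (conj u) (by rw [mul_conj, h, Int.cast_one])⟩
  obtain ⟨v, hv⟩ := h.exists_right_inv
  exact Int.eq_one_of_mul_eq_one_right (norm_nonneg u) (by rw [← norm_mul, hv, norm_one])

lemma exists_even_im_pow_three_eq (a : EisensteinInt) :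
    ∃ b : EisensteinInt, b ^ 3 = a ^ 3 ∧ Even b.im := by
  have hω : (⟨0, 1⟩ : EisensteinInt) ^ 3 = 1 := by ext <;> simp [pow_succ]
  rcases Int.even_or_odd a.im with h | h
  · exact ⟨a, rfl, h⟩
  rcases Int.even_or_odd a.re with h' | h'
  · refine ⟨⟨0, 1⟩ ^ 2 * a, by rw [mul_pow, ← pow_mul, pow_mul', hω, one_pow, one_mul], ?_⟩
    simpa [pow_two, parity_simps] using h'
  · refine ⟨⟨0, 1⟩ * a, by rw [mul_pow, hω, one_mul], ?_⟩
    simpa [parity_simps] using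
      iff_of_false (Int.not_even_iff_odd.mpr h') (Int.not_even_iff_odd.mpr h)

lemma eq_one_or_neg_one_of_isUnit {z u : EisensteinInt} (hu : IsUnit u) (hz : Odd (norm z))
    (hzi : Even z.im) (hzu : Even (z * u).im) : u = 1 ∨ u = -1 := by
  have hre : Odd z.re := by simpa [norm, parity_simps, hzi] using hz
  have him : Even u.im := by
    simpa [parity_simps, hzi, Int.not_even_iff_odd.mpr hre] using hzu
  obtain ⟨k, hk⟩ := him
  have hnorm := four_mul_norm u
  rw [isUnit_iff_norm_eq_one.mp hu] at hnorm
  have hk0 : k = 0 := by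
    nlinarith [sq_nonneg (2 * u.re - u.im), sq_nonneg (k - 1), sq_nonneg (k + 1)]
  have hre1 : u.re ^ 2 = 1 ^ 2 := by subst hk0; simp at hk; nlinarith
  rcases sq_eq_sq_iff_eq_or_eq_neg.mp hre1 with h1 | h1
  · exact Or.inl (EisensteinInt.ext h1 (by simp [hk, hk0]))
  · exact Or.inr (EisensteinInt.ext (by simp [h1]) (by simp [hk, hk0]))

lemma norm_intCast (n : ℤ) : norm n = n ^ 2 := by
  simp [norm]

lemma norm_dvd_norm {a b : EisensteinInt} (h : a ∣ b) : norm a ∣ norm b := by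
  obtain ⟨c, rfl⟩ := h
  exact ⟨norm c, norm_mul a c⟩

/-- `ofSqrt m n = m + n √-3`, where `√-3 = 1 + 2ω`. -/
def ofSqrt (m n : ℤ) : EisensteinInt := ⟨m + n, 2 * n⟩

lemma ofSqrt_inj {m n m' n' : ℤ} : ofSqrt m n = ofSqrt m' n' ↔ m = m' ∧ n = n' := by
  simp only [ofSqrt, EisensteinInt.ext_iff]
  omega

lemma exists_eq_ofSqrt {a : EisensteinInt} (h : Even a.im) : ∃ m n, a = ofSqrt m n := by
  obtain ⟨n, hn⟩ := h
  exact ⟨a.re - n, n, by ext <;> simp [ofSqrt, hn]; ring⟩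

lemma ofSqrt_pow_three (m n : ℤ) :
    ofSqrt m n ^ 3 = ofSqrt (m ^ 3 - 9 * m * n ^ 2) (3 * m ^ 2 * n - 3 * n ^ 3) := by
  ext <;> simp [ofSqrt, pow_succ] <;> ring

lemma neg_ofSqrt (m n : ℤ) : -ofSqrt m n = ofSqrt (-m) (-n) := by
  ext <;> simp [ofSqrt, add_comm]

lemma norm_ofSqrt (m n : ℤ) : norm (ofSqrt m n) = m ^ 2 + 3 * n ^ 2 := by
  simp only [norm, ofSqrt]; ring

lemma isCoprime_ofSqrt_conj {p q t : ℤ} (hpq : IsCoprime p q) (h2 : ¬ 2 ∣ t) (h3 : ¬ 3 ∣ t)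
    (h : p ^ 2 + 3 * q ^ 2 = t ^ 3) : IsCoprime (ofSqrt p q) (conj (ofSqrt p q)) := by
  refine IsRelPrime.isCoprime fun z hz hz' => isUnit_iff_norm_eq_one.mpr ?_
  have hp : norm z ∣ 4 * p ^ 2 := by
    have : z ∣ ((2 * p : ℤ) : EisensteinInt) := by
      convert dvd_add hz hz' using 1; ext <;> simp [ofSqrt, conj]; ring
    convert norm_dvd_norm this using 1
    rw [norm_intCast]; ring
  have hq : norm z ∣ 12 * q ^ 2 := by
    have : z ∣ ((2 * q : ℤ) : EisensteinInt) * ofSqrt 0 1 := by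
      convert dvd_sub hz hz' using 1; ext <;> simp [ofSqrt, conj]; ring
    convert norm_dvd_norm this using 1
    rw [norm_mul, norm_intCast, norm_ofSqrt]; ring
  have h12 : norm z ∣ 12 := by
    obtain ⟨a, b, hab⟩ := hpq.pow (m := 2) (n := 2)
    have : 12 = 3 * a * (4 * p ^ 2) + b * (12 * q ^ 2) := by linear_combination -12 * hab
    rw [this]
    exact dvd_add (hp.mul_left _) (hq.mul_left _)
  have ht : norm z ∣ t ^ 3 := by rw [← h, ← norm_ofSqrt]; exact norm_dvd_norm hz
  have hcop : IsCoprime (t ^ 3) 12 := by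
    have h2' := (Int.prime_two.coprime_iff_not_dvd.mpr h2).symm
    have h3' := (Int.prime_three.coprime_iff_not_dvd.mpr h3).symm
    exact (h2'.mul_right (h2'.mul_right h3')).pow_left
  rcases Int.isUnit_iff.mp (hcop.isUnit_of_dvd' ht h12) with h1 | h1
  · exact h1
  · linarith [norm_nonneg z]

end EisensteinInt

lemma not_two_dvd_of_sq_add_three_mul_sq_eq_cube {p q t : ℤ} (hpq : IsCoprime p q)
    (h : p ^ 2 + 3 * q ^ 2 = t ^ 3) : ¬ 2 ∣ t := by
  rintro ⟨s, rfl⟩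
  have key : ∀ a b : ZMod 8, a ^ 2 + 3 * b ^ 2 = 0 → 4 * a = 0 ∧ 4 * b = 0 := by decide
  obtain ⟨hp, hq⟩ := key p q (by
    have := congrArg (Int.cast : ℤ → ZMod 8) h
    push_cast at this
    rw [this, mul_pow]
    exact mul_eq_zero_of_left rfl _)
  have two_dvd : ∀ a : ℤ, 4 * (a : ZMod 8) = 0 → 2 ∣ a := fun a ha => by
    have := (ZMod.intCast_zmod_eq_zero_iff_dvd (4 * a) 8).mp (by push_cast; exact ha)
    omega
  exact Int.prime_two.not_isUnit (hpq.isUnit_of_dvd' (two_dvd p hp) (two_dvd q hq))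

lemma not_three_dvd_of_sq_add_three_mul_sq_eq_cube {p q t : ℤ} (hpq : IsCoprime p q)
    (h : p ^ 2 + 3 * q ^ 2 = t ^ 3) : ¬ 3 ∣ t := by
  rintro ⟨s, rfl⟩
  have key : ∀ a b : ZMod 9, a ^ 2 + 3 * b ^ 2 = 0 → 3 * a = 0 ∧ 3 * b = 0 := by decide
  obtain ⟨hp, hq⟩ := key p q (by
    have := congrArg (Int.cast : ℤ → ZMod 9) h
    push_cast at this
    rw [this, mul_pow]
    exact mul_eq_zero_of_left rfl _)
  have three_dvd : ∀ a : ℤ, 3 * (a : ZMod 9) = 0 → 3 ∣ a := fun a ha => by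
    have := (ZMod.intCast_zmod_eq_zero_iff_dvd (3 * a) 9).mp (by push_cast; exact ha)
    omega
  exact Int.prime_three.not_isUnit (hpq.isUnit_of_dvd' (three_dvd p hp) (three_dvd q hq))

open EisensteinInt in
theorem exists_eq_of_sq_add_three_mul_sq_eq_cube {p q t : ℤ} (hpq : IsCoprime p q)
    (h : p ^ 2 + 3 * q ^ 2 = t ^ 3) :
    ∃ m n : ℤ, p = m ^ 3 - 9 * m * n ^ 2 ∧ q = 3 * m ^ 2 * n - 3 * n ^ 3 := by
  have h2 := not_two_dvd_of_sq_add_three_mul_sq_eq_cube hpq h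
  have h3 := not_three_dvd_of_sq_add_three_mul_sq_eq_cube hpq h
  have hprod : ofSqrt p q * conj (ofSqrt p q) = (t : EisensteinInt) ^ 3 := by
    rw [mul_conj, norm_ofSqrt, h, Int.cast_pow]
  obtain ⟨γ, u, hγ⟩ := exists_associated_pow_of_mul_eq_pow'
    (isCoprime_ofSqrt_conj hpq h2 h3 h) hprod
  obtain ⟨δ, hδ, hδim⟩ := exists_even_im_pow_three_eq γ
  obtain ⟨m, n, rfl⟩ := exists_eq_ofSqrt hδim
  rw [← hδ, ofSqrt_pow_three] at hγ
  have hu : (u : EisensteinInt) = 1 ∨ (u : EisensteinInt) = -1 := by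
    refine eq_one_or_neg_one_of_isUnit (z := ofSqrt _ _) u.isUnit ?_ (even_two_mul _)
      (by rw [hγ]; exact even_two_mul q)
    have := congrArg norm hγ
    rw [norm_mul, isUnit_iff_norm_eq_one.mp u.isUnit, mul_one, norm_ofSqrt p q, h] at this
    rw [this, Int.odd_pow' three_ne_zero]
    exact Int.not_even_iff_odd.mp (by rwa [even_iff_two_dvd])
  rcases hu with hu | hu
  · rw [hu, mul_one, ofSqrt_inj] at hγ
    exact ⟨m, n, hγ.1.symm, hγ.2.symm⟩
  · rw [hu, mul_neg_one, neg_ofSqrt, ofSqrt_inj] at hγ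
    exact ⟨-m, -n, by linear_combination -hγ.1, by linear_combination -hγ.2⟩

lemma isCoprime_and_odd_sub_of_isCoprime {m n : ℤ}
    (h : IsCoprime (m ^ 3 - 9 * m * n ^ 2) (3 * m ^ 2 * n - 3 * n ^ 3)) :
    IsCoprime m n ∧ Odd (m - n) := by
  have hmn : IsCoprime m n := by
    rw [show m ^ 3 - 9 * m * n ^ 2 = m * (m ^ 2 - 9 * n ^ 2) by ring,
      show 3 * m ^ 2 * n - 3 * n ^ 3 = n * (3 * m ^ 2 - 3 * n ^ 2) by ring] at h
    exact h.of_mul_left_left.of_mul_right_left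
  refine ⟨hmn, Int.not_even_iff_odd.mp fun heven => ?_⟩
  rcases Int.even_or_odd m with hm | hm
  · have hn : Even n := by simpa [Int.even_sub, hm] using heven
    exact Int.prime_two.not_isUnit (hmn.isUnit_of_dvd' hm.two_dvd hn.two_dvd)
  · have hn : Odd n := Int.not_even_iff_odd.mp fun hn =>
      Int.not_even_iff_odd.mpr hm ((Int.even_sub.mp heven).mpr hn)
    have h3 : Odd (3 : ℤ) := by decide
    have h9 : Odd (9 : ℤ) := by decide
    exact Int.prime_two.not_isUnit (h.isUnit_of_dvd'
      ((hm.pow.sub_odd ((h9.mul hm).mul hn.pow)).two_dvd)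
      (((h3.mul hm.pow).mul hn).sub_odd (h3.mul hn.pow)).two_dvd)

lemma exists_cubes_of_sub_mul_add_mul_eq_cube {x y s : ℤ} (hxy : IsCoprime x y)
    (hodd : Odd (x - y)) (h : (x - y) * (x + y) * x = s ^ 3) :
    ∃ e f g : ℤ, x - y = e ^ 3 ∧ x + y = f ^ 3 ∧ x = g ^ 3 := by
  have h1 : IsCoprime (x - y) x := by
    simpa [sub_eq_neg_add] using hxy.neg_right.symm.add_mul_right_left 1
  have h2 : IsCoprime (x + y) x := by
    simpa [add_comm] using hxy.symm.add_mul_right_left 1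
  have h12 : IsCoprime (x - y) (x + y) := by
    have := ((Int.isCoprime_two_right.mpr hodd).mul_right h1).add_mul_left_right (-1)
    rwa [show 2 * x + (x - y) * -1 = x + y by ring] at this
  obtain ⟨e, he⟩ := Int.eq_pow_of_mul_eq_pow_odd_left (h12.mul_right h1) (by decide : Odd 3)
    (by rw [← mul_assoc]; exact h)
  obtain ⟨f, hf⟩ := Int.eq_pow_of_mul_eq_pow_odd_left (h12.symm.mul_right h2) (by decide : Odd 3)
    (by rw [← h]; ring)
  obtain ⟨g, hg⟩ := Int.eq_pow_of_mul_eq_pow_odd_right (h1.mul_left h2) (by decide : Odd 3) h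
  exact ⟨e, f, g, he, hf, hg⟩

lemma Int.natAbs_lt_natAbs_mul_of_dvd {g s k : ℤ} (hg : g ∣ s) (hs : s ≠ 0) (hk : 2 ≤ k.natAbs) :
    g.natAbs < (s * k).natAbs := by
  have := Int.natAbs_le_of_dvd_ne_zero hg hs
  have := Int.natAbs_pos.mpr hs
  rw [Int.natAbs_mul]
  nlinarith

lemma Int.Prime.dvd_of_pow_three_dvd_two_mul_pow_three {π c : ℤ} (hπ : Prime π)
    (h : π ^ 3 ∣ 2 * c ^ 3) : π ∣ c := by
  by_contra hc
  have h2 := Int.natAbs_dvd_natAbs.mpr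
    (((hπ.coprime_iff_not_dvd.mpr hc).pow (m := 3) (n := 3)).dvd_of_dvd_mul_right h)
  rw [Int.natAbs_pow] at h2
  have := Nat.pow_le_pow_left (Int.prime_iff_natAbs_prime.mp hπ).two_le 3
  have := Nat.le_of_dvd two_pos h2
  omega

def IsNontrivialSolution (a b c : ℤ) : Prop := a ^ 3 + b ^ 3 = 2 * c ^ 3 ∧ a ≠ b ∧ c ≠ 0

lemma exists_smaller_solution_of_not_three_dvd {p q c : ℤ} (hpq : IsCoprime p q) (hp : ¬ 3 ∣ p)
    (hq : q ≠ 0) (h : p * (p ^ 2 + 3 * q ^ 2) = c ^ 3) :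
    ∃ e f g, IsNontrivialSolution e f g ∧ g.natAbs < c.natAbs := by
  have hcop : IsCoprime p (p ^ 2 + 3 * q ^ 2) := by
    have := ((Int.prime_three.coprime_iff_not_dvd.mpr hp).symm.mul_right
      (hpq.pow_right (n := 2))).add_mul_left_right p
    rwa [show 3 * q ^ 2 + p * p = p ^ 2 + 3 * q ^ 2 by ring] at this
  obtain ⟨⟨S, hS⟩, ⟨T, hT⟩⟩ := Int.eq_pow_of_mul_eq_pow_odd hcop (by decide : Odd 3) h
  have hc : c = S * T := (Odd.pow_inj (by decide : Odd 3)).mp (by rw [mul_pow, ← hS, ← hT, h])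
  have hT2 : 2 ≤ T.natAbs := by
    have hT1 : 1 < T ^ 3 := by
      rw [← hT]; nlinarith [sq_nonneg p, pow_pos (abs_pos.mpr hq) 2, sq_abs q]
    by_contra hT2
    obtain ⟨h1, h2⟩ : -1 ≤ T ∧ T ≤ 1 := by omega
    interval_cases T <;> norm_num at hT1
  obtain ⟨m, n, rfl, rfl⟩ := exists_eq_of_sq_add_three_mul_sq_eq_cube hpq hT
  obtain ⟨hmn, hodd⟩ := isCoprime_and_odd_sub_of_isCoprime hpq
  have hm3 : ¬ 3 ∣ m := fun h3 => hp (by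
    rw [show m ^ 3 - 9 * m * n ^ 2 = m * (m ^ 2 - 9 * n ^ 2) by ring]
    exact h3.mul_right _)
  obtain ⟨e, f, g, he, hf, hg⟩ := exists_cubes_of_sub_mul_add_mul_eq_cube (y := 3 * n) (s := S)
    ((Int.prime_three.coprime_iff_not_dvd.mpr hm3).symm.mul_right hmn)
    (by rw [show m - 3 * n = m - n - 2 * n by ring]; exact hodd.sub_even (even_two_mul n))
    (by rw [← hS]; ring)
  have hgS : g ∣ S := (Int.pow_dvd_pow_iff three_ne_zero).mp
    ⟨(m - 3 * n) * (m + 3 * n), by rw [← hS, ← hg]; ring⟩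
  refine ⟨e, f, g, ⟨by linear_combination -he - hf + 2 * hg, fun hef => hq ?_, fun hg0 => hp ?_⟩,
    hc ▸ Int.natAbs_lt_natAbs_mul_of_dvd hgS ?_ hT2⟩
  · subst hef
    have : n = 0 := by linarith
    simp [this]
  · simp [hg, hg0]
  · rintro rfl
    exact hp ⟨0, by linear_combination hS⟩

lemma exists_smaller_solution_of_three_dvd {q r c : ℤ} (hqr : IsCoprime q (3 * r)) (hr : r ≠ 0)
    (h : 9 * r * (q ^ 2 + 3 * r ^ 2) = c ^ 3) :
    ∃ e f g, IsNontrivialSolution e f g ∧ g.natAbs < c.natAbs := by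
  have hq3 : ¬ 3 ∣ q := fun h3 =>
    Int.prime_three.not_isUnit (hqr.isUnit_of_dvd' h3 (dvd_mul_right 3 r))
  replace hqr : IsCoprime q r := hqr.of_mul_right_right
  have hcop : IsCoprime (9 * r) (q ^ 2 + 3 * r ^ 2) := by
    have h3 : IsCoprime 3 (q ^ 2 + 3 * r ^ 2) := by
      refine Int.prime_three.coprime_iff_not_dvd.mpr fun h3 => hq3 ?_
      exact Int.prime_three.dvd_of_dvd_pow (n := 2) ((dvd_add_left (dvd_mul_right 3 _)).mp h3)
    have hr : IsCoprime r (q ^ 2 + 3 * r ^ 2) := by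
      have := (hqr.symm.pow_right (n := 2)).add_mul_left_right (3 * r)
      rwa [show q ^ 2 + r * (3 * r) = q ^ 2 + 3 * r ^ 2 by ring] at this
    exact (h3.pow_left (m := 2)).mul_left hr
  obtain ⟨⟨S, hS⟩, ⟨T, hT⟩⟩ := Int.eq_pow_of_mul_eq_pow_odd hcop (by decide : Odd 3) h
  have hc : c = S * T := (Odd.pow_inj (by decide : Odd 3)).mp (by rw [mul_pow, ← hS, ← hT, h])
  have hT0 : T ≠ 0 := by
    rintro rfl
    exact hr (by nlinarith [sq_nonneg q, sq_nonneg r])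
  obtain ⟨s, rfl⟩ : 3 ∣ S := Int.prime_three.dvd_of_dvd_pow (n := 3) ⟨3 * r, by rw [← hS]; ring⟩
  have hs : s ≠ 0 := by rintro rfl; simp [hr] at hS
  obtain ⟨m, n, rfl, rfl⟩ := exists_eq_of_sq_add_three_mul_sq_eq_cube hqr hT
  obtain ⟨hmn, hodd⟩ := isCoprime_and_odd_sub_of_isCoprime hqr
  have hprod : (n - m) * (n + m) * n = (-s) ^ 3 :=
    mul_left_cancel₀ (by norm_num : (27 : ℤ) ≠ 0) (by linear_combination -hS)
  obtain ⟨e, f, g, he, hf, hg⟩ :=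
    exists_cubes_of_sub_mul_add_mul_eq_cube hmn.symm (by rw [← neg_sub]; exact hodd.neg) hprod
  have hgs : g ∣ s := dvd_neg.mp ((Int.pow_dvd_pow_iff three_ne_zero).mp
    ⟨(n - m) * (n + m), by rw [← hprod, ← hg]; ring⟩)
  refine ⟨e, f, g, ⟨by linear_combination -he - hf + 2 * hg, fun hef => hq3 ?_, fun hg0 => hr ?_⟩,
    ?_⟩
  · subst hef
    have : m = 0 := by linarith
    simp [this]
  · simp [hg, hg0]
  · rw [hc, show 3 * s * T = s * (3 * T) by ring]
    exact Int.natAbs_lt_natAbs_mul_of_dvd hgs hs (by omega)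

lemma IsNontrivialSolution.exists_smaller {a b c : ℤ} (hsol : IsNontrivialSolution a b c) :
    ∃ a' b' c', IsNontrivialSolution a' b' c' ∧ c'.natAbs < c.natAbs := by
  obtain ⟨h, hab, hc⟩ := hsol
  by_cases hcop : IsCoprime a b
  · have hpar : Even a ↔ Even b := by
      simpa [Int.even_add, Int.even_pow] using (h ▸ even_two_mul (c ^ 3) : Even (a ^ 3 + b ^ 3))
    have ha : ¬ Even a := fun ha =>
      Int.prime_two.not_isUnit (hcop.isUnit_of_dvd' ha.two_dvd (hpar.mp ha).two_dvd)
    obtain ⟨k, rfl⟩ := Int.not_even_iff_odd.mp ha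
    obtain ⟨l, rfl⟩ := Int.not_even_iff_odd.mp (mt hpar.mpr ha)
    have hpq : IsCoprime (k + l + 1) (k - l) := by
      obtain ⟨u, v, huv⟩ := hcop
      exact ⟨u + v, u - v, by linear_combination huv⟩
    have key : (k + l + 1) * ((k + l + 1) ^ 2 + 3 * (k - l) ^ 2) = c ^ 3 := by
      linarith [show 2 * ((k + l + 1) * ((k + l + 1) ^ 2 + 3 * (k - l) ^ 2)) = 2 * c ^ 3 by
        linear_combination h]
    have hq : k - l ≠ 0 := fun hq => hab (by linarith)
    by_cases h3 : 3 ∣ k + l + 1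
    · obtain ⟨r, hr⟩ := h3
      rw [hr] at hpq key
      refine exists_smaller_solution_of_three_dvd hpq.symm (fun hr0 => hc ?_)
        (by linear_combination key)
      simpa [hr0] using key.symm
    · exact exists_smaller_solution_of_not_three_dvd hpq h3 hq key
  · obtain ⟨π, hπ, ⟨a', rfl⟩, ⟨b', rfl⟩⟩ : ∃ π, Prime π ∧ π ∣ a ∧ π ∣ b := by
      by_contra! H
      exact hcop (isCoprime_of_prime_dvd (fun ⟨ha, hb⟩ => hab (ha.trans hb.symm)) H)
    obtain ⟨c', rfl⟩ := Int.Prime.dvd_of_pow_three_dvd_two_mul_pow_three hπ ⟨a' ^ 3 + b' ^ 3, by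
      rw [← h]; ring⟩
    have hπ0 := hπ.ne_zero
    refine ⟨a', b', c', ⟨?_, fun h' => hab (by rw [h']), right_ne_zero_of_mul hc⟩, ?_⟩
    · exact mul_left_cancel₀ (pow_ne_zero 3 hπ0) (by linear_combination h)
    · rw [mul_comm]
      exact Int.natAbs_lt_natAbs_mul_of_dvd dvd_rfl (right_ne_zero_of_mul hc)
        (Int.prime_iff_natAbs_prime.mp hπ).two_le

theorem Int.eq_of_cube_add_cube_eq_two_mul_cube {a b c : ℤ} (h : a ^ 3 + b ^ 3 = 2 * c ^ 3)
    (hc : c ≠ 0) : a = b := by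
  by_contra hab
  suffices ∀ n : ℕ, ∀ a b c : ℤ, c.natAbs = n → ¬ IsNontrivialSolution a b c from
    this _ a b c rfl ⟨h, hab, hc⟩
  intro n
  induction n using Nat.strong_induction_on with
  | _ n ih =>
    rintro a b c rfl hsol
    obtain ⟨a', b', c', hsol', hlt⟩ := hsol.exists_smaller
    exact ih _ hlt a' b' c' rfl hsol'

theorem Rat.eq_of_cube_add_cube_eq_two_mul_cube {u v w : ℚ} (h : u ^ 3 + v ^ 3 = 2 * w ^ 3)
    (hw : w ≠ 0) : u = v := by
  set N : ℤ := u.den * v.den * w.den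
  have hN : (N : ℚ) ≠ 0 := by positivity
  have clear_den : ∀ x : ℚ, (x.den : ℤ) ∣ N → ∃ a : ℤ, (a : ℚ) = x * N := fun x ⟨k, hk⟩ =>
    ⟨x.num * k, by rw [hk]; push_cast; rw [← mul_assoc, Rat.mul_den_eq_num]⟩
  obtain ⟨a, ha⟩ := clear_den u ⟨v.den * w.den, by ring⟩
  obtain ⟨b, hb⟩ := clear_den v ⟨u.den * w.den, by ring⟩
  obtain ⟨c, hc⟩ := clear_den w ⟨u.den * v.den, by ring⟩
  have habc : a ^ 3 + b ^ 3 = 2 * c ^ 3 := by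
    exact_mod_cast (by rw [ha, hb, hc]; linear_combination (N : ℚ) ^ 3 * h :
      (a : ℚ) ^ 3 + b ^ 3 = 2 * c ^ 3)
  have hc0 : c ≠ 0 := by
    rintro rfl
    exact mul_ne_zero hw hN (by simpa using hc.symm)
  have hab := Int.eq_of_cube_add_cube_eq_two_mul_cube habc hc0
  exact mul_right_cancel₀ hN (by rw [← ha, ← hb, hab])

theorem sq_eq_cube_add_one_iff {x y : ℚ} : y ^ 2 = x ^ 3 + 1 ↔
    (x, y) ∈ ({(0, 1), (0, -1), (-1, 0), (2, 3), (2, -3)} : Set (ℚ × ℚ)) := by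
  simp only [Set.mem_insert_iff, Set.mem_singleton_iff, Prod.mk.injEq]
  refine ⟨fun h => ?_, by
    rintro (⟨rfl, rfl⟩ | ⟨rfl, rfl⟩ | ⟨rfl, rfl⟩ | ⟨rfl, rfl⟩ | ⟨rfl, rfl⟩) <;> norm_num⟩
  rcases eq_or_ne x 0 with rfl | hx
  · have : (y - 1) * (y + 1) = 0 := by linear_combination h
    rcases mul_eq_zero.mp this with hy | hy
    · exact Or.inl ⟨rfl, by linarith⟩
    · exact Or.inr (Or.inl ⟨rfl, by linarith⟩)
  have hUV : y * (y - 3) * (y + 3) = 0 := by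
    have hD : 3 * x * (y ^ 2 + 3) ≠ 0 := by positivity
    have := Rat.eq_of_cube_add_cube_eq_two_mul_cube (u := y ^ 3 + 9 * y ^ 2 - 9 * y - 9)
      (v := -y ^ 3 + 9 * y ^ 2 + 9 * y - 9) (w := 3 * x * (y ^ 2 + 3)) ?_ hD
    · linear_combination this / 2
    · linear_combination 54 * (y ^ 2 + 3) ^ 3 * h
  have cube_root : ∀ {a : ℚ}, x ^ 3 = a ^ 3 → x = a := (Odd.pow_inj (by decide)).mp
  rcases mul_eq_zero.mp hUV with hUV | hy
  · rcases mul_eq_zero.mp hUV with rfl | hy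
    · exact Or.inr (Or.inr (Or.inl ⟨cube_root (by linear_combination -h), rfl⟩))
    · obtain rfl : y = 3 := by linarith
      exact Or.inr (Or.inr (Or.inr (Or.inl ⟨cube_root (by linear_combination -h), rfl⟩)))
  · obtain rfl : y = -3 := by linarith
    exact Or.inr (Or.inr (Or.inr (Or.inr ⟨cube_root (by linear_combination -h), rfl⟩)))

lemma nonsingular_W₁_iff (q : ℚ × ℚ) : W₁.Nonsingular q.1 q.2 ↔
    q ∈ ({(0, 1), (0, -1), (-1, 0), (2, 3), (2, -3)} : Set (ℚ × ℚ)) := by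
  have hΔ : W₁.Δ ≠ 0 := by
    simp [W₁, WeierstrassCurve.Δ, WeierstrassCurve.b₂, WeierstrassCurve.b₄, WeierstrassCurve.b₆,
      WeierstrassCurve.b₈]
  rw [← sq_eq_cube_add_one_iff, ← W₁.equation_iff_nonsingular_of_Δ_ne_zero hΔ,
    WeierstrassCurve.Affine.equation_iff]
  simp [W₁]

/-- The set of rational points of the elliptic curve `y² = x³ + 1` over `ℚ` consists of exactly
six points: the point at infinity together with the affine points `(0, 1)`, `(0, -1)`, `(-1, 0)`,
`(2, 3)` and `(2, -3)`. -/
theorem rational_points_of_X0_36 :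
    Nat.card W₁.Point = 6 ∧
    (∀ P : W₁.Point, P = 0 ∨ ∃ (x y : ℚ) (h : W₁.Nonsingular x y),
      P = WeierstrassCurve.Affine.Point.some x y h ∧
        (x, y) ∈ ({(0, 1), (0, -1), (-1, 0), (2, 3), (2, -3)} : Set (ℚ × ℚ))) ∧
    (∀ q ∈ ({(0, 1), (0, -1), (-1, 0), (2, 3), (2, -3)} : Set (ℚ × ℚ)),
      W₁.Nonsingular q.1 q.2) := by
  refine ⟨?_, ?_, fun q => (nonsingular_W₁_iff q).mpr⟩
  · rw [Nat.card_congr (W₁.nonsingularPointEquiv.trans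
      (Equiv.subtypeEquivRight nonsingular_W₁_iff).optionCongr), Finite.card_option,
      Nat.card_coe_set_eq]
    norm_num [Set.ncard_insert_of_notMem]
  · rintro (_ | ⟨x, y, h⟩)
    · exact Or.inl rfl
    · exact Or.inr ⟨x, y, h, rfl, (nonsingular_W₁_iff (x, y)).mp h⟩
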